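/- arXiv:2309.17215 — 2 statements merged into one kernel-verified Lean document; each statement's English description precedes it below -/
import Mathlib

section
/- Let X ∈ ℝ^{n×p} satisfy Xᵀ X = I_p, and let ε ∈ ℝ^{n×p} satisfy Xᵀ ε + εᵀ X = 0. Define the polar retraction R_X(ε) = (X + ε) · (((X + ε)ᵀ (X + ε))^{1/2})^{−1}, where M^{1/2} denotes the positive semidefinite square root of the positive definite matrix M = (X + ε)ᵀ(X + ε). Then ‖R_X(ε) − X − ε‖_F ≤ (1 + √2/2) · ‖ε‖_F², where ‖·‖_F is the Frobenius norm. -/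
open Matrix

section OldSqrt

open scoped ComplexOrder

/-- The square root of a positive semidefinite matrix, as defined in the older Mathlib
(removed since): `U * diagonal (√ eigenvalues) * U⋆`. -/
noncomputable def Matrix.PosSemidef.sqrt {n : Type*} [Fintype n] [DecidableEq n] {𝕜 : Type*} [RCLike 𝕜]
    {A : Matrix n n 𝕜} (hA : A.PosSemidef) : Matrix n n 𝕜 :=
  hA.1.eigenvectorUnitary.1 * diagonal ((↑) ∘ (√·) ∘ hA.1.eigenvalues) *
    (star hA.1.eigenvectorUnitary : Matrix n n 𝕜)

end OldSqrt

/-- The Frobenius norm of a real matrix. -/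
noncomputable def frobNorm {n p : ℕ} (A : Matrix (Fin n) (Fin p) ℝ) : ℝ :=
  Real.sqrt (∑ i, ∑ j, A i j ^ 2)

/-!
Write `M = (X + ε)ᵀ(X + ε)` and `Q = M^{1/2}`. Tangency and `XᵀX = 1` give `M = 1 + εᵀε`, and
`R_X(ε) − X − ε = (X + ε)(Q⁻¹ − 1)` has Gram matrix `(Q⁻¹ − 1) Q² (Q⁻¹ − 1) = (1 − Q)²`, so its
Frobenius norm is `‖Q − 1‖_F`. Now `Q − 1 = (Q² − 1)(Q + 1)⁻¹ = εᵀε (Q + 1)⁻¹`, and `(Q + 1)⁻¹` is a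
contraction because `Q ≥ 0`; hence `‖Q − 1‖_F ≤ ‖εᵀε‖_F ≤ ‖ε‖_F²`, so the bound already holds with
constant `1`.
-/

namespace Matrix.PosSemidef

open scoped ComplexOrder

variable {m 𝕜 : Type*} [Fintype m] [DecidableEq m] [RCLike 𝕜] {A : Matrix m m 𝕜}

lemma posSemidef_sqrt (hA : A.PosSemidef) : hA.sqrt.PosSemidef := by
  have hD : (diagonal ((↑) ∘ (√·) ∘ hA.1.eigenvalues : m → 𝕜)).PosSemidef :=
    posSemidef_diagonal_iff.mpr fun i => by simp [Real.sqrt_nonneg]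
  simpa [Matrix.PosSemidef.sqrt, star_eq_conjTranspose] using
    hD.mul_mul_conjTranspose_same (hA.1.eigenvectorUnitary : Matrix m m 𝕜)

lemma sqrt_mul_sqrt (hA : A.PosSemidef) : hA.sqrt * hA.sqrt = A := by
  set U : Matrix m m 𝕜 := hA.1.eigenvectorUnitary.1
  have hU : star U * U = 1 := Unitary.star_mul_self_of_mem hA.1.eigenvectorUnitary.prop
  have hsq : ∀ i, √(hA.1.eigenvalues i) * √(hA.1.eigenvalues i) = hA.1.eigenvalues i :=
    fun i => Real.mul_self_sqrt (hA.eigenvalues_nonneg i)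
  calc hA.sqrt * hA.sqrt
      = U * (diagonal ((↑) ∘ (√·) ∘ hA.1.eigenvalues) * (star U * U) *
          diagonal ((↑) ∘ (√·) ∘ hA.1.eigenvalues)) * star U := by
        simp only [Matrix.PosSemidef.sqrt, U, Matrix.mul_assoc]
    _ = U * diagonal (RCLike.ofReal ∘ hA.1.eigenvalues) * star U := by
        rw [hU, Matrix.mul_one, diagonal_mul_diagonal]
        simp only [Function.comp_def, ← RCLike.ofReal_mul, hsq]
    _ = A := hA.1.spectral_theorem.symm

end Matrix.PosSemidef

section Frobenius

variable {n p : ℕ}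

lemma frobNorm_eq_sqrt_trace (A : Matrix (Fin n) (Fin p) ℝ) :
    frobNorm A = √(Aᵀ * A).trace := by
  rw [frobNorm, Finset.sum_comm]
  simp only [Matrix.trace, Matrix.diag, Matrix.mul_apply, Matrix.transpose_apply, sq]

lemma frobNorm_neg (A : Matrix (Fin n) (Fin p) ℝ) : frobNorm (-A) = frobNorm A := by
  simp only [frobNorm, Matrix.neg_apply, neg_sq]

lemma frobNorm_mul_eq_of_transpose_mul_self_eq {l m : ℕ} {A : Matrix (Fin n) (Fin p) ℝ}
    {B : Matrix (Fin l) (Fin p) ℝ} (h : Aᵀ * A = Bᵀ * B) (C : Matrix (Fin p) (Fin m) ℝ) :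
    frobNorm (A * C) = frobNorm (B * C) := by
  rw [frobNorm_eq_sqrt_trace, frobNorm_eq_sqrt_trace, transpose_mul, transpose_mul,
    Matrix.mul_assoc, Matrix.mul_assoc, ← Matrix.mul_assoc Aᵀ, ← Matrix.mul_assoc Bᵀ, h]

lemma frobNorm_mul_le_of_posSemidef_one_sub {B : Matrix (Fin p) (Fin p) ℝ} (hBt : Bᵀ = B)
    (hB : (1 - B * B).PosSemidef) (A : Matrix (Fin n) (Fin p) ℝ) :
    frobNorm (A * B) ≤ frobNorm A := by
  rw [frobNorm_eq_sqrt_trace, frobNorm_eq_sqrt_trace]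
  refine Real.sqrt_le_sqrt ?_
  have h := (hB.mul_mul_conjTranspose_same A).trace_nonneg
  rw [conjTranspose_eq_transpose_of_trivial, Matrix.mul_sub, Matrix.sub_mul, Matrix.trace_sub,
    Matrix.mul_one] at h
  have hAB : ((A * B)ᵀ * (A * B)).trace = (A * (B * B) * Aᵀ).trace := by
    rw [Matrix.trace_mul_comm, transpose_mul, hBt]
    simp only [Matrix.mul_assoc]
  rw [hAB, Matrix.trace_mul_comm Aᵀ]
  linarith

section

attribute [local instance] Matrix.frobeniusNormedAddCommGroup

lemma frobNorm_eq_norm (A : Matrix (Fin n) (Fin p) ℝ) : frobNorm A = ‖A‖ := by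
  simp only [frobNorm, frobenius_norm_def, Real.norm_eq_abs, Real.rpow_two, sq_abs,
    Real.sqrt_eq_rpow]

lemma frobNorm_transpose_mul_self_le (A : Matrix (Fin n) (Fin p) ℝ) :
    frobNorm (Aᵀ * A) ≤ frobNorm A ^ 2 := by
  simpa only [frobNorm_eq_norm, frobenius_norm_transpose, sq] using frobenius_norm_mul Aᵀ A

end

end Frobenius

/-- The matrix form of `|q - 1| ≤ |q² - 1|` for `q ≥ 0`. -/
lemma frobNorm_sub_one_le_frobNorm_mul_self_sub_one {p : ℕ} {Q : Matrix (Fin p) (Fin p) ℝ}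
    (hQ : Q.PosSemidef) : frobNorm (Q - 1) ≤ frobNorm (Q * Q - 1) := by
  set T := Q + 1
  have hQt : Qᵀ = Q := by rw [← conjTranspose_eq_transpose_of_trivial]; exact hQ.1
  have hT : IsUnit T.det :=
    (isUnit_iff_isUnit_det T).1 (PosDef.posSemidef_add hQ PosDef.one).isUnit
  have hT_inv : T * T⁻¹ = 1 := mul_nonsing_inv T hT
  have hinv_T : T⁻¹ * T = 1 := nonsing_inv_mul T hT
  have hinv_symm : (T⁻¹)ᵀ = T⁻¹ := by rw [transpose_nonsing_inv, transpose_add, hQt, transpose_one]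
  have hTT : (T * T - 1).PosSemidef := by
    have hQQ : (Qᴴ * Q).PosSemidef := posSemidef_conjTranspose_mul_self Q
    rw [conjTranspose_eq_transpose_of_trivial, hQt] at hQQ
    convert hQQ.add (hQ.add hQ) using 1
    simp only [T]
    noncomm_ring
  have hcontr : (1 - T⁻¹ * T⁻¹).PosSemidef := by
    convert hTT.mul_mul_conjTranspose_same T⁻¹ using 1
    rw [conjTranspose_eq_transpose_of_trivial, hinv_symm]
    calc 1 - T⁻¹ * T⁻¹ = (T⁻¹ * T) * (T * T⁻¹) - T⁻¹ * T⁻¹ := by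
          rw [hinv_T, hT_inv, Matrix.one_mul]
      _ = T⁻¹ * (T * T - 1) * T⁻¹ := by noncomm_ring
  have hfactor : Q - 1 = (Q * Q - 1) * T⁻¹ := by
    rw [show Q * Q - 1 = (Q - 1) * T by simp only [T]; noncomm_ring, Matrix.mul_assoc, hT_inv,
      Matrix.mul_one]
  rw [hfactor]
  exact frobNorm_mul_le_of_posSemidef_one_sub hinv_symm hcontr _

/-- **Lemma 1 for the polar retraction on the Stiefel manifold**: for `X` with
`Xᵀ X = I` and tangent `ε` (`Xᵀ ε + εᵀ X = 0`), the polar retraction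
`R_X(ε) = (X + ε)(((X + ε)ᵀ(X + ε))^{1/2})⁻¹` satisfies
`‖R_X(ε) − X − ε‖_F ≤ (1 + √2/2) ‖ε‖_F²`. -/
theorem stmt_10 (n p : ℕ) (X ε : Matrix (Fin n) (Fin p) ℝ)
    (hX : Xᵀ * X = 1) (hε : Xᵀ * ε + εᵀ * X = 0)
    (hM : ((X + ε)ᵀ * (X + ε)).PosSemidef) :
    frobNorm ((X + ε) * (hM.sqrt)⁻¹ - X - ε) ≤
      (1 + Real.sqrt 2 / 2) * frobNorm ε ^ 2 := by
  set Q := hM.sqrt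
  have hM_eq : (X + ε)ᵀ * (X + ε) = 1 + εᵀ * ε := by
    rw [transpose_add, Matrix.add_mul, Matrix.mul_add, Matrix.mul_add, hX,
      eq_neg_of_add_eq_zero_left hε]
    abel
  have hQQ : Q * Q = 1 + εᵀ * ε := hM.sqrt_mul_sqrt.trans hM_eq
  have hQ_det : IsUnit Q.det := by
    have h := (isUnit_iff_isUnit_det _).1
      (PosDef.one.add_posSemidef (posSemidef_conjTranspose_mul_self ε)).isUnit
    rw [conjTranspose_eq_transpose_of_trivial, ← hQQ, det_mul, IsUnit.mul_iff] at h
    exact h.1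
  have hQ_gram : Qᵀ * Q = (X + ε)ᵀ * (X + ε) := by
    rw [← conjTranspose_eq_transpose_of_trivial, hM.posSemidef_sqrt.1, hM.sqrt_mul_sqrt]
  calc frobNorm ((X + ε) * Q⁻¹ - X - ε) = frobNorm ((X + ε) * (Q⁻¹ - 1)) := by
        rw [Matrix.mul_sub, Matrix.mul_one, sub_sub]
    _ = frobNorm (Q * (Q⁻¹ - 1)) := frobNorm_mul_eq_of_transpose_mul_self_eq hQ_gram.symm _
    _ = frobNorm (Q - 1) := by
        rw [Matrix.mul_sub, mul_nonsing_inv Q hQ_det, Matrix.mul_one, ← neg_sub, frobNorm_neg]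
    _ ≤ frobNorm (Q * Q - 1) := frobNorm_sub_one_le_frobNorm_mul_self_sub_one hM.posSemidef_sqrt
    _ = frobNorm (εᵀ * ε) := by rw [hQQ, add_sub_cancel_left]
    _ ≤ frobNorm ε ^ 2 := frobNorm_transpose_mul_self_le ε
    _ ≤ (1 + Real.sqrt 2 / 2) * frobNorm ε ^ 2 :=
        le_mul_of_one_le_left (sq_nonneg _) (by linarith [Real.sqrt_nonneg 2])
end

section
/- Let d ≥ 1 and n ≥ 1 be natural numbers, let r > 0, and let μ be the d-fold product measure on ℝ^d of the one-dimensional Gaussian measure with mean 0 and variance r². Then μ({z ∈ ℝ^d : Σ_{i=1}^d z_i² ≤ r² d (1 + √(log n / d))²}) ≥ 1 − 1/√n; equivalently, a centered Gaussian vector z ∼ N(0, r² I_d) satisfies ‖z‖₂² ≤ r² d (1 + √(log n / d))² with probability at least 1 − 1/√n. -/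
/-!
Chernoff bound for `‖z‖² = ∑ zᵢ²`: a coordinate has `E exp (s zᵢ²) = (1 - 2 s r²)^(-1/2)`, and the
choice `1 - 2 s r² = (1 + t)⁻¹` together with `log (1 + t) ≤ t` gives
`P(‖z‖² ≥ r² d (1 + t)²) ≤ exp (-d t² / 2)`. With `t = √(log n / d)` the right side is `1 / √n`.
-/

open MeasureTheory ProbabilityTheory Real
open scoped NNReal

namespace ProbabilityTheory

variable {v : ℝ≥0} {t : ℝ}

lemma gaussianPDFReal_zero_mul_exp_mul_sq (hv : v ≠ 0) (t x : ℝ) :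
    gaussianPDFReal 0 v x * exp (t * x ^ 2) =
      (√(2 * π * v))⁻¹ * exp (-((1 - 2 * t * v) / (2 * v)) * x ^ 2) := by
  have hv' : (v : ℝ) ≠ 0 := by exact_mod_cast hv
  rw [gaussianPDFReal, mul_assoc, ← exp_add]
  congr 2
  field_simp
  ring

lemma integrable_exp_mul_sq_gaussianReal (hv : v ≠ 0) (ht : 2 * t * v < 1) :
    Integrable (fun x ↦ exp (t * x ^ 2)) (gaussianReal 0 v) := by
  rw [gaussianReal_of_var_ne_zero 0 hv, integrable_withDensity_iff_integrable_smul'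
    (measurable_gaussianPDF 0 v) (.of_forall fun _ ↦ gaussianPDF_lt_top)]
  simp_rw [toReal_gaussianPDF, smul_eq_mul, gaussianPDFReal_zero_mul_exp_mul_sq hv]
  have hv' : (0 : ℝ) < v := by positivity
  exact (integrable_exp_neg_mul_sq (div_pos (by linarith) (by positivity))).const_mul _

lemma mgf_sq_gaussianReal (hv : v ≠ 0) (ht : 2 * t * v < 1) :
    mgf (fun x ↦ x ^ 2) (gaussianReal 0 v) t = (√(1 - 2 * t * v))⁻¹ := by
  have hv' : (0 : ℝ) < v := by positivity
  have hc : 0 < 1 - 2 * t * v := by linarith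
  simp_rw [mgf, integral_gaussianReal_eq_integral_smul hv, smul_eq_mul,
    gaussianPDFReal_zero_mul_exp_mul_sq hv, integral_const_mul, integral_gaussian]
  rw [← sqrt_inv, ← sqrt_inv, ← sqrt_mul (by positivity)]
  congr 1
  field_simp

lemma mgf_sum_comp_eval_pi {ι Ω : Type*} [Fintype ι] [MeasurableSpace Ω] (μ : Measure Ω)
    [SigmaFinite μ] (X : Ω → ℝ) (t : ℝ) :
    mgf (fun z : ι → Ω ↦ ∑ i, X (z i)) (Measure.pi fun _ ↦ μ) t = mgf X μ t ^ Fintype.card ι := by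
  simp_rw [mgf, Finset.mul_sum, exp_sum]
  exact integral_fintype_prod_eq_pow (fun ω ↦ exp (t * X ω))

lemma integrable_exp_mul_sum_comp_eval_pi {ι Ω : Type*} [Fintype ι] [MeasurableSpace Ω]
    {μ : Measure Ω} [SigmaFinite μ] {X : Ω → ℝ} (h : Integrable (fun ω ↦ exp (t * X ω)) μ) :
    Integrable (fun z : ι → Ω ↦ exp (t * ∑ i, X (z i))) (Measure.pi fun _ ↦ μ) := by
  simp_rw [Finset.mul_sum, exp_sum]
  exact Integrable.fintype_prod fun _ ↦ h

lemma sqrt_one_add_le_exp_half (t : ℝ) : √(1 + t) ≤ exp (t / 2) := by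
  rw [exp_half]
  exact sqrt_le_sqrt (by linarith [add_one_le_exp t])

variable {ι : Type*} [Fintype ι]

theorem measureReal_sum_sq_ge_le_exp (hv : v ≠ 0) (ht : 0 ≤ t) :
    (Measure.pi fun _ : ι ↦ gaussianReal 0 v).real
      {z | v * Fintype.card ι * (1 + t) ^ 2 ≤ ∑ i, z i ^ 2} ≤
        exp (-(Fintype.card ι * t ^ 2 / 2)) := by
  have hv' : (0 : ℝ) < v := by positivity
  -- `1 - 2 s v = (1 + t)⁻¹` makes the mgf `√(1 + t) ^ d`
  set s := t / (2 * v * (1 + t))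
  have hs : 0 ≤ s := by positivity
  have hsv : 2 * s * v = 1 - (1 + t)⁻¹ := by simp only [s]; field_simp; ring
  have hsv1 : 2 * s * v < 1 := by
    rw [hsv]
    linarith [inv_pos.2 (by linarith : 0 < 1 + t)]
  have hmgf : mgf (fun z : ι → ℝ ↦ ∑ i, z i ^ 2) (Measure.pi fun _ ↦ gaussianReal 0 v) s =
      √(1 + t) ^ Fintype.card ι := by
    rw [mgf_sum_comp_eval_pi (gaussianReal 0 v) (fun x ↦ x ^ 2), mgf_sq_gaussianReal hv hsv1, hsv,
      sub_sub_cancel, sqrt_inv, inv_inv]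
  calc _ ≤ exp (-s * (v * Fintype.card ι * (1 + t) ^ 2)) * √(1 + t) ^ Fintype.card ι :=
        hmgf ▸ measure_ge_le_exp_mul_mgf _ hs
          (integrable_exp_mul_sum_comp_eval_pi (integrable_exp_mul_sq_gaussianReal hv hsv1))
    _ ≤ exp (-(Fintype.card ι * t * (1 + t) / 2)) * exp (t / 2) ^ Fintype.card ι := by
        gcongr
        · exact le_of_eq (by simp only [s]; field_simp)
        · exact sqrt_one_add_le_exp_half t
    _ = _ := by
        rw [← exp_nat_mul, ← exp_add]
        ring_nf

theorem ofReal_one_sub_exp_le_measure_sum_sq_le (hv : v ≠ 0) (ht : 0 ≤ t) :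
    ENNReal.ofReal (1 - exp (-(Fintype.card ι * t ^ 2 / 2))) ≤
      Measure.pi (fun _ : ι ↦ gaussianReal 0 v)
        {z | ∑ i, z i ^ 2 ≤ v * Fintype.card ι * (1 + t) ^ 2} := by
  set S := {z : ι → ℝ | ∑ i, z i ^ 2 ≤ v * Fintype.card ι * (1 + t) ^ 2}
  have hcompl : (Measure.pi fun _ : ι ↦ gaussianReal 0 v).real Sᶜ = 1 - _ :=
    probReal_compl_eq_one_sub (measurableSet_le (by fun_prop) measurable_const)
  have hsub : Sᶜ ⊆ {z | v * Fintype.card ι * (1 + t) ^ 2 ≤ ∑ i, z i ^ 2} := by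
    intro z hz
    simp only [S, Set.mem_compl_iff, Set.mem_ofPred_eq, not_le] at hz
    exact hz.le
  have htail := (measureReal_mono hsub).trans (measureReal_sum_sq_ge_le_exp hv ht)
  rw [ENNReal.ofReal_le_iff_le_toReal (measure_ne_top _ _), ← measureReal_def]
  linarith

end ProbabilityTheory

/-- Gaussian norm concentration used in the proof of Theorem 1: for
`z ∼ N(0, r² I_d)` (realized as the `d`-fold product of `N(0, r²)`),
`‖z‖₂² ≤ r² d (1 + √(log n / d))²` holds with probability at least `1 − 1/√n`. -/
theorem stmt_12 (d n : ℕ) (hd : 1 ≤ d) (hn : 1 ≤ n) (r : ℝ) (hr : 0 < r)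
    (μ : Measure (Fin d → ℝ))
    (hμ : μ = Measure.pi fun _ : Fin d => gaussianReal 0 ⟨r ^ 2, sq_nonneg r⟩) :
    ENNReal.ofReal (1 - 1 / Real.sqrt n) ≤
      μ {z : Fin d → ℝ |
        ∑ i, z i ^ 2 ≤ r ^ 2 * d * (1 + Real.sqrt (Real.log n / d)) ^ 2} := by
  subst hμ
  have hd' : (0 : ℝ) < d := by exact_mod_cast hd
  have hv : (⟨r ^ 2, sq_nonneg r⟩ : ℝ≥0) ≠ 0 :=
    (NNReal.coe_pos (r := ⟨r ^ 2, sq_nonneg r⟩)).1 (pow_pos hr 2) |>.ne'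
  have hexp : exp (-(d * √(log n / d) ^ 2 / 2)) = 1 / √n := by
    rw [sq_sqrt (div_nonneg (log_natCast_nonneg n) hd'.le), mul_div_cancel₀ _ hd'.ne', exp_neg,
      exp_half, exp_log (by exact_mod_cast hn), one_div]
  have key := ofReal_one_sub_exp_le_measure_sum_sq_le (ι := Fin d) hv (sqrt_nonneg (log n / d))
  rwa [Fintype.card_fin, hexp] at key
end
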